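/- Let v > n, k with 1 ≤ k ≤ n, and d such that d > c_k where c_k = (v-n)/(kv+n) and d < 1/k. Suppose y ∈ ℝⁿ and there exist sequences tʲ = (t₁ʲ,…,tₙʲ) ∈ ℝ₊ⁿ with tʲ := Σᵢtᵢʲ → ∞, at least k indices i satisfy tᵢʲ ≥ d·tʲ, and integer vectors (qʲ,pʲ) ∈ ℤⁿ×ℤ with qʲ ≠ 0 having exactly m < k nonzero entries, such that e^{tʲ}|⟨qʲ,y⟩+pʲ| ≤ e^{-d tʲ} and e^{-tᵢʲ}|qᵢʲ| ≤ e^{-d tʲ} for all i. Then Π₊(qʲ) ≤ e^{tʲ - k d tʲ} and |⟨qʲ,y⟩+pʲ| ≤ e^{-tʲ - d tʲ}, hence ω×(y) ≥ (n + nd)/(1 - kd) > v. -/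

import Mathlib

open scoped BigOperators

/-- Π₊(q) = ∏ᵢ max(1,|qᵢ|). -/
noncomputable def piPlus {n : ℕ} (q : Fin n → ℤ) : ℝ :=
  ∏ i, max 1 |(q i : ℝ)|

/-- The multiplicative Diophantine exponent ω×(y). -/
noncomputable def omegaTimes {n : ℕ} (y : Fin n → ℝ) : EReal :=
  sSup (Real.toEReal '' {u : ℝ |
    {q : Fin n → ℤ | ∃ p : ℤ,
      |(∑ i, (q i : ℝ) * y i) + (p : ℝ)| < piPlus q ^ (-(u / n))}.Infinite})

/-! Since `|qᵢ| ≥ 1` on the support of `q`, the coordinate bounds force the support into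
`{i | tᵢ ≥ d T}`, so `Π₊(q) ≤ exp (∑_{tᵢ ≥ d T} (tᵢ - d T)) ≤ exp ((1 - k d) T)`; together with
`|⟨q, y⟩ + p| ≤ exp (-(1 + d) T)` this yields approximations of exponent `(n + n d) / (1 - k d)`.
If only finitely many `qʲ` occur, some `q₀` recurs with residuals tending to `0`, so `⟨q₀, y⟩`
is an integer and all multiples of `q₀` are exact approximations. -/

open Filter Finset Real

lemma one_le_piPlus {n : ℕ} (q : Fin n → ℤ) : 1 ≤ piPlus q :=
  one_le_prod fun _ _ => le_max_left _ _

lemma piPlus_pos {n : ℕ} (q : Fin n → ℤ) : 0 < piPlus q :=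
  zero_lt_one.trans_le (one_le_piPlus q)

lemma le_exp_sub_of_exp_mul_le {a b x : ℝ} (h : exp a * x ≤ exp b) : x ≤ exp (b - a) := by
  rwa [exp_sub, le_div_iff₀ (exp_pos a), mul_comm]

/-- The support of `q` lies in `{i | a ≤ t i}` because `|q i| ≥ 1` there. -/
lemma piPlus_le_exp_sum {n : ℕ} (q : Fin n → ℤ) (t : Fin n → ℝ) (a : ℝ)
    (h : ∀ i, exp (-t i) * |(q i : ℝ)| ≤ exp (-a)) :
    piPlus q ≤ exp (∑ i with a ≤ t i, (t i - a)) := by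
  rw [exp_sum, prod_filter]
  refine prod_le_prod (fun _ _ => zero_le_one.trans (le_max_left _ _)) fun i _ => ?_
  have hq : |(q i : ℝ)| ≤ exp (t i - a) := by
    simpa [sub_eq_add_neg, add_comm] using le_exp_sub_of_exp_mul_le (h i)
  by_cases hqi : q i = 0
  · split_ifs with hi
    · simpa [hqi] using one_le_exp (sub_nonneg.2 hi)
    · simp [hqi]
  · have h1 : (1 : ℝ) ≤ |(q i : ℝ)| := by exact_mod_cast Int.one_le_abs hqi
    have hi : a ≤ t i := by simpa using h1.trans hq
    rw [if_pos hi]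
    exact max_le (h1.trans hq) hq

lemma sum_filter_sub_le {ι : Type*} [Fintype ι] (t : ι → ℝ) (ht : ∀ i, 0 ≤ t i) {a : ℝ}
    (ha : 0 ≤ a) {k : ℕ} (hk : k ≤ #{i | a ≤ t i}) :
    ∑ i with a ≤ t i, (t i - a) ≤ ∑ i, t i - k * a := by
  rw [sum_sub_distrib, sum_const, nsmul_eq_mul]
  have hsub : ∑ i with a ≤ t i, t i ≤ ∑ i, t i :=
    sum_le_sum_of_subset_of_nonneg (subset_univ _) fun i _ _ => ht i
  have hcard : (k : ℝ) * a ≤ #{i | a ≤ t i} * a := by gcongr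
  linarith

/-- The set whose infinitude defines `omegaTimes`, at exponent `s = u / n`. -/
def approxSet {n : ℕ} (y : Fin n → ℝ) (s : ℝ) : Set (Fin n → ℤ) :=
  {q | ∃ p : ℤ, |(∑ i, (q i : ℝ) * y i) + (p : ℝ)| < piPlus q ^ (-s)}

lemma le_omegaTimes_of_forall_lt {n : ℕ} (y : Fin n → ℝ) {w : ℝ}
    (h : ∀ u < w, (approxSet y (u / n)).Infinite) : (w : EReal) ≤ omegaTimes y := by
  refine EReal.ge_of_forall_gt_iff_ge.1 fun u hu => ?_
  exact le_sSup ⟨u, h u (EReal.coe_lt_coe_iff.1 hu), rfl⟩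

section

variable {n : ℕ} {y : Fin n → ℝ} {q : Fin n → ℤ} {p : ℤ}

lemma approxSet_infinite_of_residual_eq_zero (hq : q ≠ 0)
    (hres : (∑ i, (q i : ℝ) * y i) + (p : ℝ) = 0) (s : ℝ) : (approxSet y s).Infinite := by
  refine (Set.infinite_range_of_injective (smul_left_injective ℤ hq)).mono ?_
  rintro _ ⟨c, rfl⟩
  refine ⟨c * p, ?_⟩
  have hzero : (∑ i, ((c • q) i : ℝ) * y i) + ((c * p : ℤ) : ℝ) = 0 := by
    simp only [Pi.smul_apply, smul_eq_mul, Int.cast_mul, mul_assoc, ← mul_sum]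
    linear_combination (c : ℝ) * hres
  rw [hzero, abs_zero]
  exact rpow_pos_of_pos (piPlus_pos _) _

lemma mem_approxSet_of_le_exp {a b s T : ℝ} (hb : 0 < b) (hs : a * s < b) (hT : 0 < T)
    (hpi : piPlus q ≤ exp (a * T))
    (hres : |(∑ i, (q i : ℝ) * y i) + (p : ℝ)| ≤ exp (-(b * T))) : q ∈ approxSet y s := by
  refine ⟨p, hres.trans_lt ?_⟩
  rcases le_or_gt s 0 with hs0 | hs0
  · calc exp (-(b * T)) < 1 := exp_lt_one_iff.2 (by nlinarith)
      _ ≤ piPlus q ^ (-s) := one_le_rpow (one_le_piPlus q) (by linarith)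
  · calc exp (-(b * T)) < exp (a * T * -s) := exp_lt_exp.2 (by nlinarith)
      _ = exp (a * T) ^ (-s) := exp_mul _ _
      _ ≤ piPlus q ^ (-s) := rpow_le_rpow_of_nonpos (piPlus_pos q) hpi (by linarith)

end

/-- A limit point of the integers `-p j` is an integer. -/
lemma exists_residual_eq_zero_of_frequently {n : ℕ} {y : Fin n → ℝ} {q : ℕ → Fin n → ℤ}
    {p : ℕ → ℤ} (hlim : Tendsto (fun j => |(∑ i, (q j i : ℝ) * y i) + (p j : ℝ)|) atTop (nhds 0))
    {q₀ : Fin n → ℤ} (hfreq : ∃ᶠ j in atTop, q j = q₀) :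
    ∃ p₀ : ℤ, (∑ i, (q₀ i : ℝ) * y i) + (p₀ : ℝ) = 0 := by
  set r := ∑ i, (q₀ i : ℝ) * y i
  have hcl : -r ∈ closure (Set.range ((↑) : ℤ → ℝ)) := by
    refine Metric.mem_closure_iff.2 fun ε hε => ?_
    obtain ⟨j, hj, hjε⟩ := (hfreq.and_eventually (hlim.eventually (gt_mem_nhds hε))).exists
    refine ⟨p j, Set.mem_range_self _, ?_⟩
    rw [Real.dist_eq, abs_sub_comm, sub_neg_eq_add, add_comm]
    simpa [hj] using hjε
  obtain ⟨p₀, hp₀⟩ := Int.isClosedEmbedding_coe_real.isClosed_range.closure_eq ▸ hcl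
  exact ⟨p₀, by rw [hp₀, add_neg_cancel]⟩

theorem approxSet_infinite {n : ℕ} (y : Fin n → ℝ) {a b s : ℝ} (hb : 0 < b) (hs : a * s < b)
    (T : ℕ → ℝ) (hT : Tendsto T atTop atTop) (q : ℕ → Fin n → ℤ) (p : ℕ → ℤ)
    (hq0 : ∀ j, q j ≠ 0) (hpi : ∀ j, piPlus (q j) ≤ exp (a * T j))
    (hres : ∀ j, |(∑ i, (q j i : ℝ) * y i) + (p j : ℝ)| ≤ exp (-(b * T j))) :
    (approxSet y s).Infinite := by
  intro hfin
  have hmem : ∀ᶠ j in atTop, ∃ q₀ ∈ approxSet y s, q j = q₀ :=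
    (hT.eventually_gt_atTop 0).mono fun j hj =>
      ⟨q j, mem_approxSet_of_le_exp hb hs hj (hpi j) (hres j), rfl⟩
  obtain ⟨q₀, -, hfreq⟩ := (hfin.frequently_exists).1 hmem.frequently
  have hlim : Tendsto (fun j => |(∑ i, (q j i : ℝ) * y i) + (p j : ℝ)|) atTop (nhds 0) :=
    squeeze_zero (fun _ => abs_nonneg _) hres
      (tendsto_exp_neg_atTop_nhds_zero.comp (hT.const_mul_atTop hb))
  obtain ⟨p₀, hp₀⟩ := exists_residual_eq_zero_of_frequently hlim hfreq
  obtain ⟨j, rfl⟩ := hfreq.exists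
  exact approxSet_infinite_of_residual_eq_zero (hq0 j) hp₀ s hfin

theorem negation_case_m_lt_k_general (n k : ℕ)
    (v : ℝ) (hv : (n : ℝ) < v) (d : ℝ)
    (hd : (v - n) / (k * v + n) < d) (hd' : d < 1 / k)
    (y : Fin n → ℝ)
    (t : ℕ → Fin n → ℝ) (ht : ∀ j i, 0 ≤ t j i)
    (T : ℕ → ℝ) (hT : ∀ j, T j = ∑ i, t j i)
    (hTtop : Filter.Tendsto T Filter.atTop Filter.atTop)
    (hbig : ∀ j, k ≤ (Finset.univ.filter fun i => d * T j ≤ t j i).card)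
    (q : ℕ → Fin n → ℤ) (p : ℕ → ℤ) (hq0 : ∀ j, q j ≠ 0)
    (hlast : ∀ j, Real.exp (T j) * |(∑ i, (q j i : ℝ) * y i) + (p j : ℝ)| ≤
      Real.exp (-(d * T j)))
    (hcoord : ∀ j i, Real.exp (-(t j i)) * |(q j i : ℝ)| ≤ Real.exp (-(d * T j))) :
    (∀ j, piPlus (q j) ≤ Real.exp (T j - k * d * T j) ∧
        |(∑ i, (q j i : ℝ) * y i) + (p j : ℝ)| ≤ Real.exp (-(T j) - d * T j)) ∧
    ((((n : ℝ) + n * d) / (1 - k * d) : ℝ) : EReal) ≤ omegaTimes y ∧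
    v < ((n : ℝ) + n * d) / (1 - k * d) := by
  have hn : 0 < n := by
    obtain ⟨i, -⟩ := Function.ne_iff.1 (hq0 0)
    exact i.pos
  have hv0 : 0 < v := (Nat.cast_nonneg n).trans_lt hv
  have hden : (0 : ℝ) < k * v + n := by positivity
  have hd0 : 0 < d := (div_nonneg (sub_nonneg.2 hv.le) hden.le).trans_lt hd
  have hkd : 0 < 1 - k * d := by
    rcases k.eq_zero_or_pos with rfl | hk
    · simp
    · linarith [mul_comm d k ▸ (lt_div_iff₀ (Nat.cast_pos.2 hk)).1 hd']
  have hbounds : ∀ j, piPlus (q j) ≤ exp (T j - k * d * T j) ∧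
      |(∑ i, (q j i : ℝ) * y i) + (p j : ℝ)| ≤ exp (-(T j) - d * T j) := by
    intro j
    have hdT : 0 ≤ d * T j := mul_nonneg hd0.le (hT j ▸ sum_nonneg fun i _ => ht j i)
    have hsum := sum_filter_sub_le (t j) (ht j) hdT (hbig j)
    rw [← hT j] at hsum
    refine ⟨(piPlus_le_exp_sum _ _ _ (hcoord j)).trans (exp_le_exp.2 (by linarith)), ?_⟩
    exact (le_exp_sub_of_exp_mul_le (hlast j)).trans_eq (by ring_nf)
  refine ⟨hbounds, le_omegaTimes_of_forall_lt y fun u hu => ?_, ?_⟩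
  · rw [lt_div_iff₀ hkd] at hu
    refine approxSet_infinite y (a := 1 - k * d) (b := 1 + d) (by linarith) ?_ T hTtop q p hq0
      (fun j => (hbounds j).1.trans_eq (by ring_nf)) (fun j => (hbounds j).2.trans_eq (by ring_nf))
    rw [mul_div_assoc', div_lt_iff₀ (Nat.cast_pos.2 hn)]
    linarith
  · rw [lt_div_iff₀ hkd]
    linarith [(div_lt_iff₀ hden).1 hd]

/-- The case m < k of Lemma 4.3: from unboundedly many times `tʲ` with at least `k`
indices satisfying `tᵢʲ ≥ d tʲ` and integer vectors `qʲ ≠ 0` with `m < k` nonzero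
entries satisfying the contraction estimates, one gets
`Π₊(qʲ) ≤ e^{tʲ - kd tʲ}`, `|⟨qʲ,y⟩+pʲ| ≤ e^{-tʲ - d tʲ}`, and hence
`ω×(y) ≥ (n+nd)/(1-kd) > v`. -/
theorem negation_case_m_lt_k (n k : ℕ) (hk : 1 ≤ k) (hkn : k ≤ n)
    (v : ℝ) (hv : (n : ℝ) < v) (d : ℝ)
    (hd : (v - n) / (k * v + n) < d) (hd' : d < 1 / k)
    (y : Fin n → ℝ)
    (t : ℕ → Fin n → ℝ) (ht : ∀ j i, 0 ≤ t j i)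
    (T : ℕ → ℝ) (hT : ∀ j, T j = ∑ i, t j i)
    (hTtop : Filter.Tendsto T Filter.atTop Filter.atTop)
    (hbig : ∀ j, k ≤ (Finset.univ.filter fun i => d * T j ≤ t j i).card)
    (q : ℕ → Fin n → ℤ) (p : ℕ → ℤ) (hq0 : ∀ j, q j ≠ 0)
    (m : ℕ) (hm : m < k)
    (hsupp : ∀ j, (Finset.univ.filter fun i => q j i ≠ 0).card = m)
    (hlast : ∀ j, Real.exp (T j) * |(∑ i, (q j i : ℝ) * y i) + (p j : ℝ)| ≤
      Real.exp (-(d * T j)))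
    (hcoord : ∀ j i, Real.exp (-(t j i)) * |(q j i : ℝ)| ≤ Real.exp (-(d * T j))) :
    (∀ j, piPlus (q j) ≤ Real.exp (T j - k * d * T j) ∧
        |(∑ i, (q j i : ℝ) * y i) + (p j : ℝ)| ≤ Real.exp (-(T j) - d * T j)) ∧
    ((((n : ℝ) + n * d) / (1 - k * d) : ℝ) : EReal) ≤ omegaTimes y ∧
    v < ((n : ℝ) + n * d) / (1 - k * d) :=
  negation_case_m_lt_k_general n k v hv d hd hd' y t ht T hT hTtop hbig q p hq0 hlast hcoord
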